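/- The function A ↦ det(A)^(1/n) is concave on the set of n×n positive semi-definite real symmetric matrices; that is, for PSD matrices A, B and t ∈ [0,1], det(tA + (1-t)B)^(1/n) ≥ t·det(A)^(1/n) + (1-t)·det(B)^(1/n). -/

import Mathlib

/-!
For positive definite `A`, write `A = S²` and `B = S C S` with `C = S⁻¹ B S⁻¹` positive
semidefinite. If `λᵢ` are the eigenvalues of `C`, then `det A`, `det B` and `det (A + B)` are
`det A`, `det A · ∏ λᵢ` and `det A · ∏ (1 + λᵢ)`, so Minkowski's determinant inequality
`det A ^ (1/n) + det B ^ (1/n) ≤ det (A + B) ^ (1/n)` reduces to superadditivity of the geometric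
mean, which is AM-GM applied to the ratios `1 / (1 + λᵢ)` and `λᵢ / (1 + λᵢ)`. If neither `A` nor
`B` is definite, both determinants vanish. Concavity follows by applying Minkowski to `t • A`
and `(1 - t) • B`.
-/

open Matrix

namespace Real

variable {ι : Type*} [Fintype ι] [Nonempty ι]

theorem geom_mean_add_geom_mean_le {f g : ι → ℝ} (hf : ∀ i, 0 ≤ f i) (hg : ∀ i, 0 ≤ g i) :
    (∏ i, f i) ^ (Fintype.card ι : ℝ)⁻¹ + (∏ i, g i) ^ (Fintype.card ι : ℝ)⁻¹
      ≤ (∏ i, (f i + g i)) ^ (Fintype.card ι : ℝ)⁻¹ := by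
  set w : ℝ := (Fintype.card ι : ℝ)⁻¹
  have hw : 0 < w := by positivity
  have hw_sum : ∑ _i : ι, w = 1 := by simp [w]
  by_cases hpos : ∀ i, 0 < f i + g i
  swap
  · obtain ⟨i, hi⟩ := not_forall.1 hpos
    have hfi : f i = 0 := by linarith [hf i, hg i, not_lt.1 hi]
    have hgi : g i = 0 := by linarith [hf i, hg i, not_lt.1 hi]
    rw [Finset.prod_eq_zero (Finset.mem_univ i) hfi, Finset.prod_eq_zero (Finset.mem_univ i) hgi,
      Finset.prod_eq_zero (f := fun j => f j + g j) (Finset.mem_univ i) (by simp [hfi, hgi]),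
      zero_rpow hw.ne', add_zero]
  have amgm : ∀ u : ι → ℝ, (∀ i, 0 ≤ u i) →
      (∏ i, u i) ^ w ≤ (∏ i, (f i + g i)) ^ w * ∑ i, w * (u i / (f i + g i)) := by
    intro u hu
    have hratio : ∀ i, 0 ≤ u i / (f i + g i) := fun i => div_nonneg (hu i) (hpos i).le
    calc (∏ i, u i) ^ w = (∏ i, (f i + g i)) ^ w * ∏ i, (u i / (f i + g i)) ^ w := by
          rw [finsetProd_rpow _ _ fun i _ => hratio i,
            ← mul_rpow (Finset.prod_nonneg fun i _ => (hpos i).le)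
              (Finset.prod_nonneg fun i _ => hratio i), ← Finset.prod_mul_distrib]
          congr 2 with i
          field_simp [(hpos i).ne']
      _ ≤ (∏ i, (f i + g i)) ^ w * ∑ i, w * (u i / (f i + g i)) := by
          gcongr
          · exact rpow_nonneg (Finset.prod_nonneg fun i _ => (hpos i).le) w
          exact geom_mean_le_arith_mean_weighted _ _ _ (fun i _ => hw.le) hw_sum
            fun i _ => hratio i
  calc (∏ i, f i) ^ w + (∏ i, g i) ^ w
      ≤ (∏ i, (f i + g i)) ^ w * ∑ i, w * (f i / (f i + g i))
          + (∏ i, (f i + g i)) ^ w * ∑ i, w * (g i / (f i + g i)) :=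
        add_le_add (amgm f hf) (amgm g hg)
    _ = (∏ i, (f i + g i)) ^ w := by
        rw [← mul_add, ← Finset.sum_add_distrib]
        simp_rw [← mul_add, ← add_div, div_self (hpos _).ne', mul_one, hw_sum, mul_one]

end Real

namespace Matrix

open scoped ComplexOrder MatrixOrder

variable {𝕜 ι : Type*} [RCLike 𝕜] [Fintype ι] [DecidableEq ι]

theorem IsHermitian.det_one_add {C : Matrix ι ι 𝕜} (hC : C.IsHermitian) :
    (1 + C).det = ∏ i, (1 + (hC.eigenvalues i : 𝕜)) := by
  conv_lhs => rw [hC.spectral_theorem,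
    ← map_one (Unitary.conjStarAlgAut 𝕜 _ hC.eigenvectorUnitary), ← map_add]
  rw [Unitary.conjStarAlgAut_apply, det_mul_right_comm]
  simp [← diagonal_one, diagonal_add]

theorem PosDef.exists_posSemidef_det_eq_and_det_add_eq {A B : Matrix ι ι 𝕜} (hA : A.PosDef)
    (hB : B.PosSemidef) :
    ∃ C : Matrix ι ι 𝕜, C.PosSemidef ∧ B.det = A.det * C.det ∧
      (A + B).det = A.det * (1 + C).det := by
  set S := CFC.sqrt A
  have hS : S.IsHermitian := (CFC.sqrt_nonneg A).posSemidef.1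
  have hSS : S * S = A := CFC.sqrt_mul_sqrt_self A hA.posSemidef.nonneg
  have hdetA : S.det * S.det = A.det := by rw [← det_mul, hSS]
  have hdetS : IsUnit S.det := isUnit_of_mul_isUnit_left (hdetA ▸ hA.det_pos.ne'.isUnit)
  set C := S⁻¹ * B * S⁻¹
  have hB' : S * C * S = B := by
    rw [Matrix.mul_assoc, Matrix.mul_assoc, Matrix.mul_assoc, nonsing_inv_mul S hdetS,
      Matrix.mul_one, ← Matrix.mul_assoc, mul_nonsing_inv S hdetS, Matrix.one_mul]
  have hAB : S * (1 + C) * S = A + B := by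
    rw [Matrix.mul_add, Matrix.add_mul, Matrix.mul_one, hSS, hB']
  refine ⟨C, ?_, ?_, ?_⟩
  · simpa [hS.inv.eq] using hB.conjTranspose_mul_mul_same S⁻¹
  · rw [← hB', ← hdetA, det_mul, det_mul]; ring
  · rw [← hAB, ← hdetA, det_mul, det_mul]; ring

variable [Nonempty ι] {A B : Matrix ι ι ℝ}

theorem PosDef.det_rpow_add_le (hA : A.PosDef) (hB : B.PosSemidef) :
    A.det ^ (Fintype.card ι : ℝ)⁻¹ + B.det ^ (Fintype.card ι : ℝ)⁻¹
      ≤ (A + B).det ^ (Fintype.card ι : ℝ)⁻¹ := by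
  obtain ⟨C, hC, hdetB, hdetAB⟩ := hA.exists_posSemidef_det_eq_and_det_add_eq hB
  have hev : ∀ i, 0 ≤ hC.1.eigenvalues i := hC.eigenvalues_nonneg
  have hsuper := Real.geom_mean_add_geom_mean_le (fun _ => zero_le_one) hev
  rw [Finset.prod_const_one, Real.one_rpow] at hsuper
  rw [hdetB, hdetAB, hC.1.det_eq_prod_eigenvalues, hC.1.det_one_add]
  simp only [RCLike.ofReal_real_eq_id, id]
  rw [Real.mul_rpow hA.det_pos.le (Finset.prod_nonneg fun i _ => hev i),
    Real.mul_rpow hA.det_pos.le (Finset.prod_nonneg fun i _ => add_nonneg zero_le_one (hev i))]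
  simpa only [mul_add, mul_one] using
    mul_le_mul_of_nonneg_left hsuper (Real.rpow_nonneg hA.det_pos.le _)

theorem PosSemidef.det_rpow_add_le (hA : A.PosSemidef) (hB : B.PosSemidef) :
    A.det ^ (Fintype.card ι : ℝ)⁻¹ + B.det ^ (Fintype.card ι : ℝ)⁻¹
      ≤ (A + B).det ^ (Fintype.card ι : ℝ)⁻¹ := by
  by_cases hA' : A.PosDef
  · exact hA'.det_rpow_add_le hB
  by_cases hB' : B.PosDef
  · simpa only [add_comm] using hB'.det_rpow_add_le hA
  rw [hA.posDef_iff_det_ne_zero, not_not] at hA'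
  rw [hB.posDef_iff_det_ne_zero, not_not] at hB'
  rw [hA', hB', Real.zero_rpow (by positivity), add_zero]
  exact Real.rpow_nonneg (hA.add hB).det_nonneg _

theorem det_smul_rpow_inv_card (hA : 0 ≤ A.det) {t : ℝ} (ht : 0 ≤ t) :
    (t • A).det ^ (Fintype.card ι : ℝ)⁻¹ = t * A.det ^ (Fintype.card ι : ℝ)⁻¹ := by
  rw [det_smul, Real.mul_rpow (by positivity) hA, ← Real.rpow_natCast,
    ← Real.rpow_mul ht, mul_inv_cancel₀ (by positivity), Real.rpow_one]

end Matrix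

/-- The function `A ↦ det A ^ (1/n)` is concave on PSD matrices. -/
theorem det_rpow_concave_on_posSemidef (n : ℕ) (A B : Matrix (Fin n) (Fin n) ℝ)
    (hA : A.PosSemidef) (hB : B.PosSemidef) (t : ℝ) (ht0 : 0 ≤ t) (ht1 : t ≤ 1) :
    t * A.det ^ ((n : ℝ)⁻¹) + (1 - t) * B.det ^ ((n : ℝ)⁻¹)
      ≤ (t • A + (1 - t) • B).det ^ ((n : ℝ)⁻¹) := by
  obtain rfl | hn := Nat.eq_zero_or_pos n
  · simp -- the exponent is `0⁻¹ = 0`, so every power is `1`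
  have : Nonempty (Fin n) := ⟨⟨0, hn⟩⟩
  have ht1' : 0 ≤ 1 - t := sub_nonneg.2 ht1
  have hminkowski := (hA.smul ht0).det_rpow_add_le (hB.smul ht1')
  have hsA := det_smul_rpow_inv_card hA.det_nonneg ht0
  have hsB := det_smul_rpow_inv_card hB.det_nonneg ht1'
  rw [Fintype.card_fin] at hminkowski hsA hsB
  rwa [hsA, hsB] at hminkowski
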